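/- arXiv:math/0610976 — 3 statements merged into one kernel-verified Lean document; each statement's English description precedes it below -/
import Mathlib

section
/- The number of type B peak pseudo-compositions of n ≥ 1 equals the Fibonacci number f_{n+1}, where f₀ = f₁ = 1 and f_n = f_{n-1} + f_{n-2}. -/
/-! A peak composition (positive parts, all but the last exceeding `1`) of `m + 2` either is `2`
followed by a peak composition of `m`, or lowering its first part by one gives a peak composition
of `m + 1`; hence peak compositions of `m` are counted by `fib m`. A type B peak
pseudo-composition is a first part `a ≥ 0` followed by a peak composition or by nothing. Those of
`n + 1` with `a = 0` are peak compositions of `n + 1` behind a zero, the others lower `a` to one of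
`n`, so there are `1 + fib 1 + ⋯ + fib n = fib (n + 2) = fibP (n + 1)` of them.

Cardinalities are taken as `Set.encard`, additive on disjoint unions with no finiteness side
condition. -/

/-- Fibonacci numbers with `f 0 = f 1 = 1`. -/
def fibP : ℕ → ℕ
  | 0 => 1
  | 1 => 1
  | n + 2 => fibP (n + 1) + fibP n

theorem fibP_eq_fib : ∀ n, fibP n = Nat.fib (n + 1)
  | 0 => rfl
  | 1 => rfl
  | n + 2 => by rw [fibP, fibP_eq_fib n, fibP_eq_fib (n + 1), Nat.fib_add_two (n := n + 1)]; ring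

def IsPeakComposition : List ℕ → Prop
  | [] => False
  | [c] => 0 < c
  | c :: d :: t => 1 < c ∧ IsPeakComposition (d :: t)

theorem isPeakComposition_cons_iff {c : ℕ} {t : List ℕ} :
    IsPeakComposition (c :: t) ↔ t = [] ∧ 0 < c ∨ 1 < c ∧ IsPeakComposition t := by
  cases t <;> simp [IsPeakComposition]

theorem IsPeakComposition.sum_pos : ∀ {l : List ℕ}, IsPeakComposition l → 0 < l.sum
  | [c], h => by simpa [IsPeakComposition] using h
  | c :: d :: t, h => by
    have := h.2.sum_pos
    simp only [List.sum_cons] at this ⊢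
    omega

theorem eq_nil_or_isPeakComposition_iff_getD : ∀ {t : List ℕ},
    (t = [] ∨ IsPeakComposition t) ↔
      (∀ x ∈ t, 0 < x) ∧ ∀ j, j + 1 < t.length → 1 < t.getD j 0
  | [] => by simp
  | [c] => by simp [IsPeakComposition]
  | c :: d :: t => by
    have ih := eq_nil_or_isPeakComposition_iff_getD (t := d :: t)
    simp only [reduceCtorEq, false_or] at ih
    simp only [reduceCtorEq, false_or, IsPeakComposition, ih, List.mem_cons, forall_eq_or_imp,
      List.length_cons]
    constructor
    · rintro ⟨hc, ⟨hd, ht⟩, hget⟩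
      refine ⟨⟨by omega, hd, ht⟩, fun j hj => ?_⟩
      rcases j with _ | j
      · simpa using hc
      · simpa using hget j (by simpa using hj)
    · rintro ⟨⟨-, hd, ht⟩, hget⟩
      exact ⟨by simpa using hget 0 (by omega), ⟨hd, ht⟩,
        fun j hj => by simpa using hget (j + 1) (by simpa using hj)⟩

theorem List.modifyHead_injective {α : Type*} {f : α → α} (hf : Function.Injective f) :
    Function.Injective (List.modifyHead f) := by
  rintro (_ | ⟨a, s⟩) (_ | ⟨b, t⟩) h <;> simp_all [hf.eq_iff]

def peakCompositions (m : ℕ) : Set (List ℕ) := {l | IsPeakComposition l ∧ l.sum = m}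

theorem peakCompositions_zero : peakCompositions 0 = ∅ :=
  Set.eq_empty_of_forall_notMem fun _ ⟨hl, hsum⟩ => hl.sum_pos.ne' hsum

theorem peakCompositions_one : peakCompositions 1 = {[1]} := by
  ext l
  refine ⟨fun ⟨hl, hsum⟩ => ?_, by rintro rfl; simp [peakCompositions, IsPeakComposition]⟩
  rcases l with _ | ⟨c, _ | ⟨d, t⟩⟩
  · exact hl.elim
  · simpa using hsum
  · have := hl.2.sum_pos
    simp only [IsPeakComposition, List.sum_cons] at hl hsum this
    omega

theorem peakCompositions_add_two (m : ℕ) :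
    peakCompositions (m + 2) =
      List.modifyHead Nat.succ '' peakCompositions (m + 1) ∪ List.cons 2 '' peakCompositions m := by
  ext l
  constructor
  · rintro ⟨hl, hsum⟩
    obtain ⟨c, t, rfl⟩ : ∃ c t, l = c :: t := List.exists_cons_of_ne_nil (by rintro rfl; exact hl)
    rw [List.sum_cons] at hsum
    rw [isPeakComposition_cons_iff] at hl
    by_cases h : c = 2 ∧ IsPeakComposition t
    · exact Or.inr ⟨t, ⟨h.2, by omega⟩, by rw [h.1]⟩
    · refine Or.inl ⟨(c - 1) :: t, ⟨?_, by rw [List.sum_cons]; omega⟩,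
        by rw [List.modifyHead_cons, Nat.succ_eq_add_one, Nat.sub_add_cancel (by omega)]⟩
      rw [isPeakComposition_cons_iff]
      rcases hl with ⟨rfl, -⟩ | ⟨hc, ht⟩
      · exact Or.inl ⟨rfl, by rw [List.sum_nil] at hsum; omega⟩
      · exact Or.inr ⟨by have : c ≠ 2 := fun hc2 => h ⟨hc2, ht⟩; omega, ht⟩
  · rintro (⟨_ | ⟨c, t⟩, ⟨hl, hsum⟩, rfl⟩ | ⟨t, ⟨ht, hsum⟩, rfl⟩)
    · exact hl.elim
    · rw [List.sum_cons] at hsum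
      refine ⟨?_, by rw [List.modifyHead_cons, List.sum_cons]; omega⟩
      rw [List.modifyHead_cons, isPeakComposition_cons_iff]
      rw [isPeakComposition_cons_iff] at hl
      rcases hl with ⟨rfl, hc⟩ | ⟨hc, ht⟩
      · exact Or.inl ⟨rfl, by omega⟩
      · exact Or.inr ⟨by omega, ht⟩
    · exact ⟨isPeakComposition_cons_iff.2 (Or.inr ⟨by norm_num, ht⟩), by simp [hsum, add_comm]⟩

theorem encard_peakCompositions : ∀ m, (peakCompositions m).encard = Nat.fib m
  | 0 => by simp [peakCompositions_zero]
  | 1 => by simp [peakCompositions_one]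
  | m + 2 => by
    have hdisj : Disjoint (List.modifyHead Nat.succ '' peakCompositions (m + 1))
        (List.cons 2 '' peakCompositions m) := by
      refine Set.disjoint_left.2 ?_
      rintro _ ⟨_ | ⟨c, s⟩, ⟨hs, -⟩, rfl⟩ ⟨t, ⟨ht, -⟩, h⟩
      · exact hs.elim
      · simp only [List.modifyHead_cons, List.cons.injEq, Nat.succ_eq_add_one] at h
        obtain ⟨hc, rfl⟩ := h
        rcases isPeakComposition_cons_iff.1 hs with ⟨rfl, -⟩ | ⟨hc', -⟩
        · exact ht
        · omega
    rw [peakCompositions_add_two, Set.encard_union_eq hdisj,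
      (List.modifyHead_injective Nat.succ_injective).encard_image, List.cons_injective.encard_image,
      encard_peakCompositions (m + 1), encard_peakCompositions m, Nat.fib_add_two]
    push_cast
    ring

def IsTypeBPeakPseudoComposition : List ℕ → Prop
  | [] => False
  | _ :: t => t = [] ∨ IsPeakComposition t

def typeBPeakPseudoCompositions (n : ℕ) : Set (List ℕ) :=
  {l | IsTypeBPeakPseudoComposition l ∧ l.sum = n}

theorem typeBPeakPseudoCompositions_zero : typeBPeakPseudoCompositions 0 = {[0]} := by
  ext l
  refine ⟨fun ⟨hl, hsum⟩ => ?_, by rintro rfl; simp [typeBPeakPseudoCompositions,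
    IsTypeBPeakPseudoComposition]⟩
  rcases l with _ | ⟨a, t⟩
  · exact hl.elim
  · rcases hl with rfl | ht
    · simpa using hsum
    · have := ht.sum_pos
      simp only [List.sum_cons] at hsum
      omega

theorem typeBPeakPseudoCompositions_succ (n : ℕ) :
    typeBPeakPseudoCompositions (n + 1) =
      List.modifyHead Nat.succ '' typeBPeakPseudoCompositions n ∪
        List.cons 0 '' peakCompositions (n + 1) := by
  ext l
  constructor
  · rintro ⟨hl, hsum⟩
    rcases l with _ | ⟨_ | a, t⟩
    · exact hl.elim
    · rw [List.sum_cons, zero_add] at hsum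
      exact Or.inr ⟨t, ⟨hl.resolve_left (by rintro rfl; simp at hsum), hsum⟩, rfl⟩
    · rw [List.sum_cons] at hsum
      exact Or.inl ⟨a :: t, ⟨hl, by rw [List.sum_cons]; omega⟩, rfl⟩
  · rintro (⟨_ | ⟨a, t⟩, ⟨hl, hsum⟩, rfl⟩ | ⟨t, ⟨ht, hsum⟩, rfl⟩)
    · exact hl.elim
    · exact ⟨hl, by rw [List.modifyHead_cons, List.sum_cons, ← hsum, List.sum_cons]; omega⟩
    · exact ⟨Or.inr ht, by simp [hsum]⟩

theorem encard_typeBPeakPseudoCompositions :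
    ∀ n, (typeBPeakPseudoCompositions n).encard = Nat.fib (n + 2)
  | 0 => by simp [typeBPeakPseudoCompositions_zero]
  | n + 1 => by
    have hdisj : Disjoint (List.modifyHead Nat.succ '' typeBPeakPseudoCompositions n)
        (List.cons 0 '' peakCompositions (n + 1)) := by
      refine Set.disjoint_left.2 ?_
      rintro _ ⟨_ | ⟨a, s⟩, ⟨hs, -⟩, rfl⟩ ⟨t, -, h⟩
      · exact hs.elim
      · simp at h
    rw [typeBPeakPseudoCompositions_succ, Set.encard_union_eq hdisj,
      (List.modifyHead_injective Nat.succ_injective).encard_image, List.cons_injective.encard_image,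
      encard_typeBPeakPseudoCompositions n, encard_peakCompositions, Nat.fib_add_two (n := n + 1)]
    push_cast
    ring

theorem mem_typeBPeakPseudoCompositions_iff {n : ℕ} (hn : n ≠ 0) {l : List ℕ} :
    l ∈ typeBPeakPseudoCompositions n ↔ (∀ x ∈ l.tail, 0 < x) ∧ l.sum = n ∧
      ∀ i, 0 < i → i + 1 < l.length → 1 < l.getD i 0 := by
  rcases l with _ | ⟨a, t⟩
  · simp [typeBPeakPseudoCompositions, IsTypeBPeakPseudoComposition, hn.symm]
  · have hmiddle : (∀ i, 0 < i → i + 1 < (a :: t).length → 1 < (a :: t).getD i 0) ↔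
        ∀ j, j + 1 < t.length → 1 < t.getD j 0 :=
      ⟨fun h j hj => by simpa using h (j + 1) j.succ_pos (by simpa using hj),
        fun h i hi hlen => by
          obtain ⟨j, rfl⟩ := Nat.exists_eq_add_of_lt hi
          simpa using h j (by simpa using hlen)⟩
    rw [hmiddle, List.tail_cons, and_left_comm, ← eq_nil_or_isPeakComposition_iff_getD]
    exact and_comm

/-- The number of type B peak pseudo-compositions of `n ≥ 1` (pseudo-compositions
whose middle parts all exceed 1) is the Fibonacci number `f_{n+1}`. -/
theorem stmt3 (n : ℕ) (hn : 1 ≤ n) :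
    Nat.card {l : List ℕ // (∀ x ∈ l.tail, 0 < x) ∧ l.sum = n ∧
      ∀ i, 0 < i → i + 1 < l.length → 1 < l.getD i 0} = fibP (n + 1) := by
  rw [← Nat.card_congr (Equiv.subtypeEquivRight fun l =>
      mem_typeBPeakPseudoCompositions_iff (Nat.one_le_iff_ne_zero.1 hn) (l := l)),
    Nat.card_coe_set_eq, Set.ncard_def, encard_typeBPeakPseudoCompositions, fibP_eq_fib]
  exact ENat.toNat_natCast _
end

section
/- A subset S of {2, ..., n−1} is the set of interior peaks of some permutation of {1, ..., n} if and only if S contains no two consecutive integers (i.e., if i ∈ S then i−1 ∉ S). -/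
/-! A set `S` without two consecutive integers is realised by the identity permutation with the
values at positions `i` and `i + 1` exchanged for every `i ∈ S`: these transpositions are disjoint,
each creates a peak at `i`, and no other position becomes a peak. -/

/-- The set of interior peaks of a word `l = (π₁, …, π_n)` (1-indexed positions):
positions `i` with `2 ≤ i ≤ n-1` and `π_{i-1} < π_i > π_{i+1}`. -/
def interiorPeaks (l : List ℕ) : Set ℕ :=
  {i | 2 ≤ i ∧ i ≤ l.length - 1 ∧
    l.getD (i - 2) 0 < l.getD (i - 1) 0 ∧ l.getD i 0 < l.getD (i - 1) 0}

theorem sub_one_notMem_interiorPeaks {l : List ℕ} {i : ℕ} (hi : i ∈ interiorPeaks l) :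
    i - 1 ∉ interiorPeaks l := by
  rintro ⟨-, -, -, hdesc⟩
  obtain ⟨-, -, hasc, -⟩ := hi
  rw [show i - 1 - 1 = i - 2 by omega] at hdesc
  omega

theorem List.map_perm_self_of_involutive {α : Type*} {l : List α} {f : α → α}
    (hf : Function.Involutive f) (hl : l.Nodup) (hmaps : ∀ a ∈ l, f a ∈ l) : (l.map f).Perm l := by
  rw [List.perm_ext_iff_of_nodup (hl.map hf.injective) hl]
  intro a
  simp only [List.mem_map]
  exact ⟨fun ⟨b, hb, hba⟩ => hba ▸ hmaps b hb, fun ha => ⟨f a, hmaps a ha, hf a⟩⟩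

theorem interiorPeaks_map_range' (f : ℕ → ℕ) (n : ℕ) :
    interiorPeaks ((List.range' 1 n).map f) =
      {i | 2 ≤ i ∧ i ≤ n - 1 ∧ f (i - 1) < f i ∧ f (i + 1) < f i} := by
  have hget : ∀ k < n, ((List.range' 1 n).map f).getD k 0 = f (k + 1) := by
    intro k hk
    rw [List.getD_eq_getElem _ _ (by simpa using hk)]
    simp [Nat.add_comm]
  ext i
  simp only [interiorPeaks, Set.mem_ofPred_eq, List.length_map, List.length_range']
  refine and_congr_right fun h2i => and_congr_right fun hin => ?_
  rw [hget _ (by omega), hget _ (by omega), hget _ (by omega),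
    show i - 2 + 1 = i - 1 by omega, show i - 1 + 1 = i by omega]

open Classical in
noncomputable def swapAt (S : Set ℕ) (j : ℕ) : ℕ :=
  if j ∈ S then j + 1 else if j - 1 ∈ S then j - 1 else j

section swapAt

variable {S : Set ℕ}

theorem swapAt_of_mem {j : ℕ} (hj : j ∈ S) : swapAt S j = j + 1 := if_pos hj

theorem swapAt_of_sub_one_mem {j : ℕ} (hj : j ∉ S) (hj' : j - 1 ∈ S) : swapAt S j = j - 1 := by
  rw [swapAt, if_neg hj, if_pos hj']

theorem swapAt_of_notMem {j : ℕ} (hj : j ∉ S) (hj' : j - 1 ∉ S) : swapAt S j = j := by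
  rw [swapAt, if_neg hj, if_neg hj']

theorem sub_one_le_swapAt (j : ℕ) : j - 1 ≤ swapAt S j := by
  unfold swapAt; split_ifs <;> omega

theorem swapAt_le_sub_one_of_sub_one_notMem {j : ℕ} (hj : j - 1 ∉ S) : swapAt S (j - 1) ≤ j - 1 := by
  unfold swapAt; split_ifs <;> omega

variable (hsep : ∀ i ∈ S, i - 1 ∉ S)
include hsep

theorem swapAt_involutive : Function.Involutive (swapAt S) := by
  intro j
  by_cases hj : j ∈ S
  · have hj1 : j + 1 ∉ S := fun h => hsep _ h (by simpa using hj)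
    rw [swapAt_of_mem hj, swapAt_of_sub_one_mem hj1 (by simpa using hj), Nat.add_sub_cancel]
  by_cases hj' : j - 1 ∈ S
  · have hj0 : j ≠ 0 := by rintro rfl; exact hj hj'
    rw [swapAt_of_sub_one_mem hj hj', swapAt_of_mem hj']
    omega
  · rw [swapAt_of_notMem hj hj', swapAt_of_notMem hj hj']

theorem isPeak_swapAt_iff {i : ℕ} :
    swapAt S (i - 1) < swapAt S i ∧ swapAt S (i + 1) < swapAt S i ↔ i ∈ S := by
  refine ⟨fun ⟨hasc, hdesc⟩ => ?_, fun hi => ?_⟩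
  · by_contra hi
    by_cases hi' : i - 1 ∈ S
    · rw [swapAt_of_mem hi', swapAt_of_sub_one_mem hi hi'] at hasc
      omega
    · rw [swapAt_of_notMem hi hi'] at hdesc
      have := sub_one_le_swapAt (S := S) (i + 1)
      by_cases hi1 : i + 1 ∈ S
      · rw [swapAt_of_mem hi1] at hdesc; omega
      · rw [swapAt_of_notMem hi1 (by simpa using hi)] at hdesc; omega
  · have hi1 : i + 1 ∉ S := fun h => hsep _ h (by simpa using hi)
    rw [swapAt_of_mem hi, swapAt_of_sub_one_mem hi1 (by simpa using hi)]
    have := swapAt_le_sub_one_of_sub_one_notMem (hsep i hi)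
    omega

end swapAt

theorem swapAt_mem_range' {S : Set ℕ} {n : ℕ} (hS : S ⊆ Set.Icc 1 (n - 1)) {j : ℕ}
    (hj : j ∈ List.range' 1 n) : swapAt S j ∈ List.range' 1 n := by
  rw [List.mem_range'_1] at hj ⊢
  unfold swapAt
  split_ifs with h h'
  · have := hS h; simp only [Set.mem_Icc] at this; omega
  · have := hS h'; simp only [Set.mem_Icc] at this; omega
  · exact hj

/-- A subset `S ⊆ {2, …, n-1}` is the interior peak set of some permutation of
`{1, …, n}` iff it contains no two consecutive integers. -/
theorem stmt4 (n : ℕ) (S : Set ℕ) (hS : S ⊆ Set.Icc 2 (n - 1)) :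
    (∃ l : List ℕ, l.Perm (List.range' 1 n) ∧ interiorPeaks l = S) ↔
      ∀ i ∈ S, i - 1 ∉ S := by
  refine ⟨fun ⟨_, _, hl⟩ => hl ▸ fun i => sub_one_notMem_interiorPeaks, fun hsep => ?_⟩
  refine ⟨(List.range' 1 n).map (swapAt S), ?_, ?_⟩
  · exact List.map_perm_self_of_involutive (swapAt_involutive hsep) List.nodup_range'
      fun j => swapAt_mem_range' (hS.trans (Set.Icc_subset_Icc_left one_le_two))
  · rw [interiorPeaks_map_range']
    ext i
    simp only [Set.mem_ofPred_eq, isPeak_swapAt_iff hsep]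
    exact ⟨fun h => h.2.2, fun hi => ⟨(hS hi).1, (hS hi).2, hi⟩⟩
end

section
/- A subset S of {0, 1, ..., n−1} is the type B peak set of some signed permutation of {1,...,n} (n ≥ 2) if and only if S contains no two consecutive integers. -/
/-!
A peak at `i + 1` forces the ascent `π_i < π_{i+1}`, which contradicts a peak at `i`; so type B
peak sets have no two consecutive elements. Conversely, if `S` has no two consecutive elements,
the simple reflections `s_i` (`i ∈ S`) of the hyperoctahedral group commute, and their product
`π` has descent set exactly `S`. Each descent `i ≥ 1` of `π` is then preceded by the ascent
at `i - 1 ∉ S`, so the descents of `π` are its peaks.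
-/

/-- The value `π_j` of the extended word of a signed permutation written as a
list `l = (π₁, …, π_n)`, with the convention `π₀ = 0`. -/
def valB (l : List ℤ) (j : ℕ) : ℤ :=
  if j = 0 then 0 else l.getD (j - 1) 0

/-- The type B peak set of a signed permutation `l = (π₁, …, π_n)`:
`{i ∈ [0, n-1] : π_{i-1} < π_i > π_{i+1}}` with `π₀ = 0`, `π₋₁ = -∞`. -/
def peakSetB (l : List ℤ) : Set ℕ :=
  {i | i < l.length ∧ valB l (i + 1) < valB l i ∧ (i = 0 ∨ valB l (i - 1) < valB l i)}

theorem succ_notMem_peakSetB (l : List ℤ) {i : ℕ} (hi : i ∈ peakSetB l) :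
    i + 1 ∉ peakSetB l := by
  rintro ⟨-, -, hi₁ | hi₁⟩
  · omega
  · exact hi.2.1.asymm hi₁

theorem List.map_perm_self_of_involutive_on {α : Type*} {l : List α} {f : α → α}
    (hl : l.Nodup) (hmaps : ∀ x ∈ l, f x ∈ l) (hinv : ∀ x ∈ l, f (f x) = x) :
    (l.map f).Perm l := by
  have hinj : ∀ x ∈ l, ∀ y ∈ l, f x = f y → x = y := fun x hx y hy hxy => by
    rw [← hinv x hx, ← hinv y hy, hxy]
  refine (List.perm_ext_iff_of_nodup (hl.map_on hinj) hl).2 fun x => ⟨fun hx => ?_, fun hx => ?_⟩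
  · obtain ⟨y, hy, rfl⟩ := List.mem_map.1 hx
    exact hmaps y hy
  · exact List.mem_map.2 ⟨f x, hmaps x hx, hinv x hx⟩

section PeakSet

variable {f : ℕ → ℤ} (hf : f 0 = 0) {n : ℕ}
include hf

theorem valB_map_range' {j : ℕ} (hj : j ≤ n) : valB ((List.range' 1 n).map f) j = f j := by
  unfold valB
  split_ifs with h
  · rw [h, hf]
  · rw [List.getD_eq_getElem?_getD, List.getElem?_map, List.getElem?_range' (by omega)]
    simp only [Option.map_some, Option.getD_some]
    congr 1
    omega

theorem peakSetB_map_range'_eq {S : Set ℕ} (hSn : ∀ i ∈ S, i < n) (hS : ∀ i ∈ S, i + 1 ∉ S)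
    (hdes : ∀ i ∈ S, f (i + 1) < f i) (hasc : ∀ i ∉ S, f i < f (i + 1)) :
    peakSetB ((List.range' 1 n).map f) = S := by
  ext i
  simp only [peakSetB, Set.mem_ofPred_eq, List.length_map, List.length_range']
  constructor
  · rintro ⟨hi, hdes_i, -⟩
    by_contra hiS
    rw [valB_map_range' hf (by omega), valB_map_range' hf (by omega)] at hdes_i
    exact (hasc i hiS).asymm hdes_i
  · intro hiS
    have hi := hSn i hiS
    refine ⟨hi, ?_, ?_⟩
    · rw [valB_map_range' hf (by omega), valB_map_range' hf (by omega)]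
      exact hdes i hiS
    · rcases i with _ | k
      · exact .inl rfl
      · refine .inr ?_
        rw [valB_map_range' hf (by omega), valB_map_range' hf (by omega)]
        exact hasc k fun hk => hS k hk hiS

end PeakSet

open Classical in
noncomputable def swapAdjacent (S : Set ℕ) (j : ℕ) : ℕ :=
  if j ≠ 0 ∧ j ∈ S then j + 1 else if 2 ≤ j ∧ j - 1 ∈ S then j - 1 else j

open Classical in
/-- `reflectionWord S j` is the entry `π_j` (with `π₀ = 0`) of the product of the simple
reflections `s_i`, `i ∈ S`: here `s₀` negates `π₁` and `s_i` swaps `π_i` and `π_{i+1}`. -/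
noncomputable def reflectionWord (S : Set ℕ) (j : ℕ) : ℤ :=
  if j = 1 ∧ 0 ∈ S then -1 else swapAdjacent S j

section Reflections

variable {S : Set ℕ} {j : ℕ}

theorem swapAdjacent_of_mem (hj₀ : j ≠ 0) (hj : j ∈ S) : swapAdjacent S j = j + 1 :=
  if_pos ⟨hj₀, hj⟩

theorem swapAdjacent_succ_of_mem (hS : ∀ i ∈ S, i + 1 ∉ S) (hj₀ : j ≠ 0) (hj : j ∈ S) :
    swapAdjacent S (j + 1) = j := by
  simp [swapAdjacent, hS j hj, hj, Nat.one_le_iff_ne_zero.2 hj₀]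

theorem swapAdjacent_eq_self (h₁ : ¬(j ≠ 0 ∧ j ∈ S)) (h₂ : ¬(2 ≤ j ∧ j - 1 ∈ S)) :
    swapAdjacent S j = j := by
  rw [swapAdjacent, if_neg h₁, if_neg h₂]

theorem swapAdjacent_swapAdjacent (hS : ∀ i ∈ S, i + 1 ∉ S) (j : ℕ) :
    swapAdjacent S (swapAdjacent S j) = j := by
  by_cases h₁ : j ≠ 0 ∧ j ∈ S
  · rw [swapAdjacent_of_mem h₁.1 h₁.2, swapAdjacent_succ_of_mem hS h₁.1 h₁.2]
  by_cases h₂ : 2 ≤ j ∧ j - 1 ∈ S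
  · obtain ⟨k, rfl⟩ : ∃ k, j = k + 1 := ⟨j - 1, by omega⟩
    rw [Nat.add_sub_cancel] at h₂
    rw [swapAdjacent_succ_of_mem hS (by omega) h₂.2, swapAdjacent_of_mem (by omega) h₂.2]
  · rw [swapAdjacent_eq_self h₁ h₂, swapAdjacent_eq_self h₁ h₂]

theorem swapAdjacent_mem_range' {n : ℕ} (hSn : ∀ i ∈ S, i < n) (hj : j ∈ List.range' 1 n) :
    swapAdjacent S j ∈ List.range' 1 n := by
  rw [List.mem_range'_1] at hj ⊢
  unfold swapAdjacent
  split_ifs with h₁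
  · have := hSn j h₁.2
    omega
  · omega
  · omega

theorem natAbs_reflectionWord (hS : ∀ i ∈ S, i + 1 ∉ S) (j : ℕ) :
    (reflectionWord S j).natAbs = swapAdjacent S j := by
  unfold reflectionWord swapAdjacent
  split_ifs <;> simp_all
  omega

theorem reflectionWord_zero : reflectionWord S 0 = 0 := by
  simp [reflectionWord, swapAdjacent]

theorem reflectionWord_le_of_notMem (hj : j ∉ S) : reflectionWord S j ≤ j := by
  unfold reflectionWord swapAdjacent
  split_ifs <;> simp_all

theorem lt_reflectionWord_succ_of_notMem (hj : j ∉ S) : (j : ℤ) < reflectionWord S (j + 1) := by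
  unfold reflectionWord swapAdjacent
  split_ifs <;> simp_all

theorem reflectionWord_succ_lt_of_mem (hS : ∀ i ∈ S, i + 1 ∉ S) (hj : j ∈ S) :
    reflectionWord S (j + 1) < reflectionWord S j := by
  unfold reflectionWord swapAdjacent
  split_ifs <;> simp_all

theorem reflectionWord_lt_succ_of_notMem (hj : j ∉ S) :
    reflectionWord S j < reflectionWord S (j + 1) :=
  (reflectionWord_le_of_notMem hj).trans_lt (lt_reflectionWord_succ_of_notMem hj)

end Reflections

/-- For `n ≥ 2`, a subset `S ⊆ {0, …, n-1}` is the type B peak set of some signed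
permutation of `{1, …, n}` iff `S` contains no two consecutive integers. -/
theorem stmt13 (n : ℕ) (hn : 2 ≤ n) (S : Set ℕ) (hS : ∀ i ∈ S, i ≤ n - 1) :
    (∃ l : List ℤ, (l.map Int.natAbs).Perm (List.range' 1 n) ∧ peakSetB l = S) ↔
      ∀ i ∈ S, i + 1 ∉ S := by
  constructor
  · rintro ⟨l, -, rfl⟩ i hi
    exact succ_notMem_peakSetB l hi
  intro hcons
  have hSn : ∀ i ∈ S, i < n := fun i hi => by have := hS i hi; omega
  refine ⟨(List.range' 1 n).map (reflectionWord S), ?_, ?_⟩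
  · rw [List.map_map, show Int.natAbs ∘ reflectionWord S = swapAdjacent S from
      funext (natAbs_reflectionWord hcons)]
    exact List.map_perm_self_of_involutive_on List.nodup_range'
      (fun j hj => swapAdjacent_mem_range' hSn hj) (fun j _ => swapAdjacent_swapAdjacent hcons j)
  · exact peakSetB_map_range'_eq reflectionWord_zero hSn hcons
      (fun _ => reflectionWord_succ_lt_of_mem hcons) (fun _ => reflectionWord_lt_succ_of_notMem)
end
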